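/- arXiv:2208.03597 — 3 statements merged into one kernel-verified Lean document; each statement's English description precedes it below -/
import Mathlib

section
/- Fix a > 0. Let ν be a Borel probability measure on ℝⁿ satisfying ν(B_r) ≲ r^a for every ball B_r of radius r. If A ⊂ ℝⁿ satisfies ν(A) ≥ κ > 0, then for every δ > 0 there exists a finite subset F ⊂ A that is δ-separated, satisfies #(F ∩ B_r(x)) ≲ (r/δ)^a for all x ∈ ℝⁿ and δ ≤ r ≤ 1, and has cardinality #F ≳ κ δ^{−a}. -/
open Metric Set MeasureTheory
open scoped ENNReal

noncomputable section

abbrev Eucl (n : ℕ) := EuclideanSpace ℝ (Fin n)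

/-- `F` is a `(δ,s)`-set with counting constant `C`: it is `δ`-separated and
`#(F ∩ B_r(x)) ≤ C (r/δ)^s` for all `x` and all `δ ≤ r ≤ 1`. -/
def IsDeltaSet {α : Type*} [PseudoMetricSpace α] (δ s C : ℝ) (F : Finset α) : Prop :=
  (∀ x ∈ F, ∀ y ∈ F, x ≠ y → δ ≤ dist x y) ∧
  ∀ (x : α) (r : ℝ), δ ≤ r → r ≤ 1 →
    (((F : Set α) ∩ closedBall x r).ncard : ℝ) ≤ C * (r / δ) ^ s

/-!
Cover `ℝⁿ` by the dyadic cubes of side `δ 2^j`. The Frostman condition gives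
`ν(Q) ≤ C' δ^a ⌈(2^j)^a⌉` for such a cube `Q`. Going up the tree of cubes, choose in each cube `Q`
a finite set of points of `A ∩ Q`, at most one per `δ`-cube, with at most `⌈(2^i)^a⌉` points in
every subcube of side `δ 2^i` and with `ν(A ∩ Q) ≤ C' δ^a · #points`: take the union of the
children's sets and, if it is too large, truncate it to `⌈(2^j)^a⌉` points, which keeps the mass
bound precisely because `ν(Q)` itself is at most `C' δ^a ⌈(2^j)^a⌉`. Finitely many top-level
cubes carry half of `ν(A)`. Keeping one parity class of the `δ`-cubes makes the points
`δ`-separated at the cost of a factor `2ⁿ`, and a ball of radius `r ∈ [δ, 1]` meets at most `2ⁿ`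
cubes of side between `2r` and `4r`.
-/

open scoped Finset

section Pruning

/- `q j x` labels the level-`j` cell containing `x`, and `p` sends the label of a cell to the
label of its parent cell. -/
variable {X L : Type*} {q : ℕ → X → L} {p : L → L}

def IsCappedBelow [DecidableEq L] (q : ℕ → X → L) (N : ℕ → ℕ) (j : ℕ) (F : Finset X) : Prop :=
  ∀ i < j, ∀ z, #{x ∈ F | q i x = z} ≤ N i

theorem IsCappedBelow.anti [DecidableEq L] {N : ℕ → ℕ} {j : ℕ} {F G : Finset X}
    (hG : IsCappedBelow q N j G) (hFG : F ⊆ G) : IsCappedBelow q N j F :=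
  fun i hi z => (Finset.card_le_card (Finset.filter_subset_filter _ hFG)).trans (hG i hi z)

theorem IsCappedBelow.succ [DecidableEq L] {N : ℕ → ℕ} {j : ℕ} {F : Finset X}
    (hF : IsCappedBelow q N j F) (hcard : #F ≤ N j) : IsCappedBelow q N (j + 1) F := by
  intro i hi z
  rcases (Nat.lt_succ_iff.1 hi).lt_or_eq with hi | rfl
  · exact hF i hi z
  · exact (Finset.card_filter_le _ _).trans hcard

theorem apply_add_eq_iterate (hq : ∀ j x, q (j + 1) x = p (q j x)) (i k : ℕ) (x : X) :
    q (i + k) x = p^[k] (q i x) := by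
  induction k with
  | zero => rfl
  | succ k ih => rw [← add_assoc, hq, ih, Function.iterate_succ_apply']

theorem card_biUnion_of_subset_preimage [DecidableEq X] {j : ℕ} {s : Finset L}
    {F : L → Finset X} (hF : ∀ z, ↑(F z) ⊆ q j ⁻¹' {z}) :
    #(s.biUnion F) = ∑ z ∈ s, #(F z) :=
  Finset.card_biUnion fun _ _ _ _ hne =>
    Finset.disjoint_left.2 fun _ hx hx' => hne <| (hF _ hx).symm.trans (hF _ hx')

/-- Points of the same level-`i` cell lie in the same level-`j` cell for `i ≤ j`, hence in the
same member of the union. -/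
theorem IsCappedBelow.biUnion [DecidableEq X] [DecidableEq L]
    (hq : ∀ j x, q (j + 1) x = p (q j x)) {N : ℕ → ℕ} {j : ℕ} {s : Finset L} {F : L → Finset X}
    (hF : ∀ z, ↑(F z) ⊆ q j ⁻¹' {z}) (hcap : ∀ z, IsCappedBelow q N (j + 1) (F z)) :
    IsCappedBelow q N (j + 1) (s.biUnion F) := by
  intro i hi w
  obtain ⟨k, rfl⟩ := Nat.exists_eq_add_of_le (Nat.lt_succ_iff.1 hi)
  refine (Finset.card_le_card fun x hx => ?_).trans (hcap (p^[k] w) i hi w)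
  obtain ⟨hxF, hxw⟩ := Finset.mem_filter.1 hx
  obtain ⟨z, -, hxz⟩ := Finset.mem_biUnion.1 hxF
  have hz : p^[k] w = z := by rw [← hxw, ← apply_add_eq_iterate hq]; exact hF z hxz
  exact Finset.mem_filter.2 ⟨hz ▸ hxz, hxw⟩

variable [MeasurableSpace X] {ν : Measure X} {w : ℝ≥0∞} {N : ℕ → ℕ}

theorem exists_subset_isCappedBelow_succ [DecidableEq L] {A : Set X} {j : ℕ} {z : L}
    (hcube : ν (q j ⁻¹' {z}) ≤ w * N j) {G : Finset X} (hG : ↑G ⊆ A ∩ q j ⁻¹' {z})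
    (hcap : IsCappedBelow q N j G) (hmass : ν (A ∩ q j ⁻¹' {z}) ≤ w * #G) :
    ∃ F : Finset X, ↑F ⊆ A ∩ q j ⁻¹' {z} ∧ IsCappedBelow q N (j + 1) F ∧
      ν (A ∩ q j ⁻¹' {z}) ≤ w * #F := by
  obtain ⟨F, hFG, hF⟩ := Finset.exists_subset_card_eq (min_le_left #G (N j))
  refine ⟨F, (Finset.coe_subset.2 hFG).trans hG,
    (hcap.anti hFG).succ (hF.trans_le (min_le_right _ _)), ?_⟩
  rw [hF, Nat.mono_cast.map_min, mul_min]
  exact le_min hmass ((measure_mono inter_subset_right).trans hcube)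

theorem exists_isCappedBelow_subset_of_measure_le [DecidableEq X] [DecidableEq L]
    (hq : ∀ j x, q (j + 1) x = p (q j x)) (hp : ∀ z, (p ⁻¹' {z}).Finite) (hN : N 0 ≤ 1)
    (hcube : ∀ j z, ν (q j ⁻¹' {z}) ≤ w * N j) (A : Set X) (j : ℕ) (z : L) :
    ∃ F : Finset X, ↑F ⊆ A ∩ q j ⁻¹' {z} ∧ IsCappedBelow q N (j + 1) F ∧
      ν (A ∩ q j ⁻¹' {z}) ≤ w * #F := by
  induction j generalizing z with
  | zero =>
    rcases (A ∩ q 0 ⁻¹' {z}).eq_empty_or_nonempty with hA | ⟨x, hx⟩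
    · exact ⟨∅, by simp, fun i _ z => by simp, by simp [hA]⟩
    refine exists_subset_isCappedBelow_succ (hcube 0 z) (G := {x}) (by simpa)
      (fun i hi => absurd hi (Nat.not_lt_zero i)) ?_
    calc ν (A ∩ q 0 ⁻¹' {z}) ≤ w * N 0 := (measure_mono inter_subset_right).trans (hcube 0 z)
      _ ≤ w * #{x} := by gcongr; simpa using hN
  | succ j ih =>
    choose F hFA hcap hmass using ih
    have hFj : ∀ z, ↑(F z) ⊆ q j ⁻¹' {z} := fun z => (hFA z).trans inter_subset_right
    set children := (hp z).toFinset
    refine exists_subset_isCappedBelow_succ (hcube (j + 1) z) (G := children.biUnion F) ?_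
      (IsCappedBelow.biUnion hq hFj hcap) ?_
    · intro x hx
      obtain ⟨z', hz', hxz'⟩ := Finset.mem_biUnion.1 hx
      obtain ⟨hxA, hxz⟩ := hFA z' hxz'
      refine ⟨hxA, ?_⟩
      rw [mem_preimage, hq, mem_singleton_iff.1 hxz]
      simpa [children] using hz'
    calc ν (A ∩ q (j + 1) ⁻¹' {z}) ≤ ν (⋃ z' ∈ children, A ∩ q j ⁻¹' {z'}) := by
          refine measure_mono fun x hx => mem_biUnion ?_ ⟨hx.1, rfl⟩
          simpa [children, ← hq] using hx.2
      _ ≤ ∑ z' ∈ children, ν (A ∩ q j ⁻¹' {z'}) := measure_biUnion_finset_le _ _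
      _ ≤ ∑ z' ∈ children, w * #(F z') := Finset.sum_le_sum fun z' _ => hmass z'
      _ = w * #(children.biUnion F) := by
          rw [card_biUnion_of_subset_preimage hFj, ← Finset.mul_sum, Nat.cast_sum]

theorem exists_isCappedBelow_subset_of_lt_measure [DecidableEq X] [DecidableEq L] [Countable L]
    (hq : ∀ j x, q (j + 1) x = p (q j x)) (hp : ∀ z, (p ⁻¹' {z}).Finite) (hN : N 0 ≤ 1)
    (hcube : ∀ j z, ν (q j ⁻¹' {z}) ≤ w * N j) (A : Set X) (m : ℕ) {c : ℝ≥0∞} (hc : c < ν A) :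
    ∃ F : Finset X, ↑F ⊆ A ∧ IsCappedBelow q N (m + 1) F ∧ c ≤ w * #F := by
  choose F hFA hcap hmass using exists_isCappedBelow_subset_of_measure_le hq hp hN hcube A m
  have hcover : A ⊆ ⋃ z, A ∩ q m ⁻¹' {z} := fun x hx => mem_iUnion.2 ⟨q m x, hx, rfl⟩
  have hA : ν A ≤ ∑' z, ν (A ∩ q m ⁻¹' {z}) := (measure_mono hcover).trans (measure_iUnion_le _)
  rw [ENNReal.tsum_eq_iSup_sum] at hA
  obtain ⟨s, hs⟩ := lt_iSup_iff.1 (hc.trans_le hA)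
  have hFm : ∀ z, ↑(F z) ⊆ q m ⁻¹' {z} := fun z => (hFA z).trans inter_subset_right
  refine ⟨s.biUnion F, by simpa using fun z _ => (hFA z).trans inter_subset_left,
    IsCappedBelow.biUnion hq hFm hcap, ?_⟩
  calc c ≤ ∑ z ∈ s, ν (A ∩ q m ⁻¹' {z}) := hs.le
    _ ≤ ∑ z ∈ s, w * #(F z) := Finset.sum_le_sum fun z _ => hmass z
    _ = w * #(s.biUnion F) := by
        rw [card_biUnion_of_subset_preimage hFm, ← Finset.mul_sum, Nat.cast_sum]

end Pruning

theorem le_abs_sub_of_two_le_abs_floor_sub {s u v : ℝ} (hs : 0 < s)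
    (h : 2 ≤ |⌊u / s⌋ - ⌊v / s⌋|) : s ≤ |u - v| := by
  have h' : (2 : ℝ) ≤ |(⌊u / s⌋ : ℝ) - ⌊v / s⌋| := by exact_mod_cast h
  have hu := Int.floor_le (u / s)
  have hu' := Int.lt_floor_add_one (u / s)
  have hv := Int.floor_le (v / s)
  have hv' := Int.lt_floor_add_one (v / s)
  have : 1 ≤ |u / s - v / s| := by
    rcases le_abs'.1 h' with h' | h'
    · exact le_abs'.2 (Or.inl (by linarith))
    · exact le_abs'.2 (Or.inr (by linarith))
  rwa [← sub_div, abs_div, abs_of_pos hs, le_div_iff₀ hs, one_mul] at this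

theorem floor_div_eq_or_of_abs_sub_le {s r u c : ℝ} (hs : 0 < s) (hr : 2 * r ≤ s)
    (h : |u - c| ≤ r) : ⌊u / s⌋ = ⌊(c - r) / s⌋ ∨ ⌊u / s⌋ = ⌊(c - r) / s⌋ + 1 := by
  obtain ⟨h₁, h₂⟩ := abs_le.1 h
  have hlo : ⌊(c - r) / s⌋ ≤ ⌊u / s⌋ := Int.floor_mono (by gcongr; linarith)
  have hhi : ⌊u / s⌋ ≤ ⌊(c - r) / s⌋ + 1 := by
    rw [← Int.floor_add_one]
    refine Int.floor_mono ?_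
    rw [div_add_one hs.ne', div_le_div_iff_of_pos_right hs]
    linarith
  omega

theorem exists_mul_two_pow_mem_Icc {δ r : ℝ} (hδ : 0 < δ) (hr : δ ≤ 2 * r) :
    ∃ j : ℕ, δ * 2 ^ j ∈ Icc (2 * r) (4 * r) := by
  obtain ⟨k, hk, hk'⟩ := exists_nat_pow_near ((one_le_div hδ).2 hr) one_lt_two
  refine ⟨k + 1, ?_, ?_⟩
  · rw [div_lt_iff₀ hδ] at hk'
    linarith
  · rw [le_div_iff₀ hδ] at hk
    rw [pow_succ]
    linarith

theorem natCeil_two_pow_rpow_le {a δ r : ℝ} (ha : 0 ≤ a) (hδ : 0 < δ) {j : ℕ}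
    (hj : δ * 2 ^ j ≤ 4 * r) : (⌈((2 : ℝ) ^ j) ^ a⌉₊ : ℝ) ≤ 2 * 4 ^ a * (r / δ) ^ a := by
  have hone : 1 ≤ ((2 : ℝ) ^ j) ^ a := Real.one_le_rpow (one_le_pow₀ one_le_two) ha
  have hr : 0 ≤ r := by nlinarith [pow_pos (two_pos : (0 : ℝ) < 2) j]
  have hle : ((2 : ℝ) ^ j) ^ a ≤ 4 ^ a * (r / δ) ^ a := by
    rw [← Real.mul_rpow zero_le_four (div_nonneg hr hδ.le), mul_div_assoc']
    exact Real.rpow_le_rpow (by positivity) ((le_div_iff₀ hδ).2 (by linarith)) ha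
  linarith [Nat.ceil_lt_add_one (zero_le_one.trans hone)]

section Dyadic

variable {ι : Type*}

def dyadicIndex (δ : ℝ) (j : ℕ) (x : EuclideanSpace ℝ ι) : ι → ℤ :=
  fun i => ⌊x i / (δ * 2 ^ j)⌋

theorem dyadicIndex_succ (δ : ℝ) (j : ℕ) (x : EuclideanSpace ℝ ι) :
    dyadicIndex δ (j + 1) x = fun i => dyadicIndex δ j x i / 2 := by
  funext i
  simpa [dyadicIndex, pow_succ, ← mul_assoc, ← div_div] using
    Int.floor_div_natCast (x i / (δ * 2 ^ j)) 2

variable [Fintype ι]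

theorem finite_preimage_div_two (z : ι → ℤ) :
    ((fun (w : ι → ℤ) i => w i / 2) ⁻¹' {z}).Finite := by
  refine (Set.Finite.pi' fun i => Set.finite_Icc (2 * z i) (2 * z i + 1)).subset ?_
  rintro w rfl i
  constructor <;> simp <;> omega

theorem dyadicIndex_preimage_subset_closedBall {δ : ℝ} (hδ : 0 < δ) (j : ℕ) (z : ι → ℤ) :
    dyadicIndex δ j ⁻¹' {z} ⊆ closedBall (WithLp.toLp 2 fun i => z i * (δ * 2 ^ j))
      ((Fintype.card ι + 1) * (δ * 2 ^ j)) := by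
  set s := δ * 2 ^ j
  have hs : 0 < s := by positivity
  intro x hx
  have hcoord : ∀ i, dist (x i) (z i * s) ^ 2 ≤ s ^ 2 := fun i => by
    obtain ⟨h₁, h₂⟩ := Int.floor_eq_iff.1 (congrFun hx i)
    rw [le_div_iff₀ hs] at h₁
    rw [div_lt_iff₀ hs] at h₂
    rw [Real.dist_eq, sq_abs]
    nlinarith
  rw [mem_closedBall, EuclideanSpace.dist_eq]
  calc √(∑ i, dist (x i) (z i * s) ^ 2) ≤ √(Fintype.card ι * s ^ 2) := by
        gcongr
        simpa using Finset.sum_le_sum fun i (_ : i ∈ Finset.univ) => hcoord i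
    _ ≤ √(((Fintype.card ι + 1) * s) ^ 2) := by gcongr; nlinarith
    _ = (Fintype.card ι + 1) * s := Real.sqrt_sq (by positivity)

theorem measure_dyadicIndex_preimage_le {ν : Measure (EuclideanSpace ℝ ι)} {a C : ℝ}
    (hν : ∀ x r, 0 < r → ν (closedBall x r) ≤ ENNReal.ofReal (C * r ^ a)) {δ : ℝ} (hδ : 0 < δ)
    (j : ℕ) (z : ι → ℤ) :
    ν (dyadicIndex δ j ⁻¹' {z}) ≤
      ENNReal.ofReal (C * ((Fintype.card ι + 1) * δ) ^ a) * ⌈((2 : ℝ) ^ j) ^ a⌉₊ := by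
  calc ν (dyadicIndex δ j ⁻¹' {z})
      ≤ ENNReal.ofReal (C * ((Fintype.card ι + 1) * (δ * 2 ^ j)) ^ a) :=
        (measure_mono (dyadicIndex_preimage_subset_closedBall hδ j z)).trans
          (hν _ _ (by positivity))
    _ = ENNReal.ofReal (C * ((Fintype.card ι + 1) * δ) ^ a) *
          ENNReal.ofReal (((2 : ℝ) ^ j) ^ a) := by
        rw [← ENNReal.ofReal_mul' (by positivity), ← mul_assoc, mul_assoc C,
          ← Real.mul_rpow (by positivity) (by positivity), mul_assoc]
    _ ≤ _ := by gcongr; exact ENNReal.ofReal_le_natCast.2 (Nat.le_ceil _)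

theorem le_dist_of_dyadicIndex_ne {δ : ℝ} (hδ : 0 < δ) {j : ℕ} {x y : EuclideanSpace ℝ ι}
    (hne : dyadicIndex δ j x ≠ dyadicIndex δ j y)
    (hpar : ∀ i, (dyadicIndex δ j x i : ZMod 2) = dyadicIndex δ j y i) :
    δ * 2 ^ j ≤ dist x y := by
  obtain ⟨i, hi⟩ := Function.ne_iff.1 hne
  have h2 : 2 ≤ |dyadicIndex δ j x i - dyadicIndex δ j y i| := by
    obtain ⟨t, ht⟩ := (ZMod.intCast_eq_intCast_iff_dvd_sub _ _ 2).1 (hpar i)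
    rw [abs_sub_comm, ht, abs_mul]
    have : t ≠ 0 := by rintro rfl; omega
    simpa using Int.one_le_abs this
  exact (le_abs_sub_of_two_le_abs_floor_sub (by positivity) h2).trans (PiLp.dist_apply_le x y i)

theorem exists_subset_separated {δ : ℝ} (hδ : 0 < δ) (F₀ : Finset (EuclideanSpace ℝ ι))
    (hF₀ : ∀ z, #{x ∈ F₀ | dyadicIndex δ 0 x = z} ≤ 1) :
    ∃ F ⊆ F₀, (∀ x ∈ F, ∀ y ∈ F, x ≠ y → δ ≤ dist x y) ∧ #F₀ ≤ 2 ^ Fintype.card ι * #F := by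
  classical
  set parity : EuclideanSpace ℝ ι → ι → ZMod 2 := fun x i => dyadicIndex δ 0 x i
  obtain ⟨c, -, hc⟩ := Finset.exists_le_card_fiber_of_nsmul_le_card_of_maps_to (s := F₀) (f := parity)
    (fun _ _ => Finset.mem_univ _) Finset.univ_nonempty
    (b := (#F₀ : ℝ) / 2 ^ Fintype.card ι) (by simp [mul_div_cancel₀])
  refine ⟨{x ∈ F₀ | parity x = c}, Finset.filter_subset _ _, fun x hx y hy hxy => ?_, ?_⟩
  · obtain ⟨hxF, hxc⟩ := Finset.mem_filter.1 hx
    obtain ⟨hyF, hyc⟩ := Finset.mem_filter.1 hy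
    have hne : dyadicIndex δ 0 x ≠ dyadicIndex δ 0 y := fun h =>
      hxy <| Finset.card_le_one.1 (hF₀ _) x (Finset.mem_filter.2 ⟨hxF, rfl⟩) y
        (Finset.mem_filter.2 ⟨hyF, h.symm⟩)
    simpa using le_dist_of_dyadicIndex_ne hδ hne (congrFun (hxc.trans hyc.symm))
  · rw [div_le_iff₀ (by positivity), mul_comm] at hc
    exact_mod_cast hc

theorem ncard_inter_closedBall_le {δ r : ℝ} (hδ : 0 < δ) {j : ℕ} (hr : 2 * r ≤ δ * 2 ^ j)
    {F : Finset (EuclideanSpace ℝ ι)} {K : ℕ} (hF : ∀ z, #{y ∈ F | dyadicIndex δ j y = z} ≤ K)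
    (x : EuclideanSpace ℝ ι) :
    ((F : Set (EuclideanSpace ℝ ι)) ∩ closedBall x r).ncard ≤ 2 ^ Fintype.card ι * K := by
  classical
  set s := δ * 2 ^ j
  have hs : 0 < s := by positivity
  set T := Fintype.piFinset fun i => ({⌊(x i - r) / s⌋, ⌊(x i - r) / s⌋ + 1} : Finset ℤ)
  have hT : #T ≤ 2 ^ Fintype.card ι := by
    rw [Fintype.card_piFinset]
    exact (Finset.prod_le_prod' fun i _ => Finset.card_le_two).trans_eq (by simp)
  have hcover :
      {y ∈ F | y ∈ closedBall x r} ⊆ T.biUnion fun z => {y ∈ F | dyadicIndex δ j y = z} := by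
    intro y hy
    obtain ⟨hyF, hy⟩ := Finset.mem_filter.1 hy
    refine Finset.mem_biUnion.2
      ⟨_, Fintype.mem_piFinset.2 fun i => ?_, Finset.mem_filter.2 ⟨hyF, rfl⟩⟩
    simpa [dyadicIndex] using floor_div_eq_or_of_abs_sub_le hs hr
      ((PiLp.dist_apply_le y x i).trans (mem_closedBall.1 hy))
  have hcoe : (F : Set (EuclideanSpace ℝ ι)) ∩ closedBall x r = ↑{y ∈ F | y ∈ closedBall x r} := by
    ext; simp
  rw [hcoe, Set.ncard_coe_finset]
  calc #{y ∈ F | y ∈ closedBall x r} ≤ #T * K :=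
        (Finset.card_le_card hcover).trans (Finset.card_biUnion_le_card_mul _ _ _ fun z _ => hF z)
    _ ≤ 2 ^ Fintype.card ι * K := Nat.mul_le_mul_right K hT

theorem isDeltaSet_of_isCappedBelow {a δ : ℝ} (ha : 0 ≤ a) (hδ : 0 < δ) {m : ℕ}
    (hm : 4 < δ * 2 ^ m) {F : Finset (EuclideanSpace ℝ ι)}
    (hsep : ∀ x ∈ F, ∀ y ∈ F, x ≠ y → δ ≤ dist x y)
    (hcap : IsCappedBelow (dyadicIndex δ) (fun j => ⌈((2 : ℝ) ^ j) ^ a⌉₊) (m + 1) F) :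
    IsDeltaSet δ a (2 ^ (Fintype.card ι + 1) * 4 ^ a) F := by
  refine ⟨hsep, fun x r hδr hr1 => ?_⟩
  obtain ⟨j, hj₁, hj₂⟩ := exists_mul_two_pow_mem_Icc hδ (by linarith)
  have hjm : j < m + 1 := by
    have : (2 : ℝ) ^ j < 2 ^ m := by nlinarith
    exact Nat.lt_succ_of_lt ((pow_lt_pow_iff_right₀ one_lt_two).1 this)
  calc (((F : Set (EuclideanSpace ℝ ι)) ∩ closedBall x r).ncard : ℝ)
      ≤ 2 ^ Fintype.card ι * ⌈((2 : ℝ) ^ j) ^ a⌉₊ := by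
        exact_mod_cast ncard_inter_closedBall_le hδ hj₁ (hcap j hjm) x
    _ ≤ 2 ^ Fintype.card ι * (2 * 4 ^ a * (r / δ) ^ a) := by
        gcongr; exact natCeil_two_pow_rpow_le ha hδ hj₂
    _ = 2 ^ (Fintype.card ι + 1) * 4 ^ a * (r / δ) ^ a := by ring

end Dyadic

/-- from a Frostman-type measure `ν` with `ν(B_r) ≤ C r^a` and
`ν(A) ≥ κ`, one extracts a `(δ,a)`-subset `F ⊆ A` with `#F ≳ κ δ^{-a}`;
the implied constants depend only on `n`, `a` (and `C`). -/
theorem frostman_to_delta_set {n : ℕ} (a C : ℝ) (ha : 0 < a) (hC : 0 < C) :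
    ∃ C₁ > (0:ℝ), ∃ c > (0:ℝ),
      ∀ (ν : Measure (Eucl n)), IsProbabilityMeasure ν →
        (∀ (x : Eucl n) (r : ℝ), 0 < r → ν (closedBall x r) ≤ ENNReal.ofReal (C * r ^ a)) →
        ∀ (A : Set (Eucl n)) (κ : ℝ), 0 < κ → ENNReal.ofReal κ ≤ ν A →
          ∀ (δ : ℝ), 0 < δ →
            ∃ F : Finset (Eucl n), (F : Set (Eucl n)) ⊆ A ∧
              IsDeltaSet δ a C₁ F ∧ c * (κ * δ ^ (-a)) ≤ (F.card : ℝ) := by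
  classical
  refine ⟨2 ^ (n + 1) * 4 ^ a, by positivity, (2 * 2 ^ n * C * (n + 1) ^ a)⁻¹, by positivity, ?_⟩
  intro ν _ hν A κ hκ hκA δ hδ
  obtain ⟨m, hm⟩ : ∃ m : ℕ, 4 / δ < 2 ^ m := pow_unbounded_of_one_lt _ one_lt_two
  have hN : ⌈((2 : ℝ) ^ 0) ^ a⌉₊ ≤ 1 := by simp
  obtain ⟨F₀, hF₀A, hF₀cap, hF₀mass⟩ := exists_isCappedBelow_subset_of_lt_measure
    (dyadicIndex_succ δ) finite_preimage_div_two hN (measure_dyadicIndex_preimage_le hν hδ) A m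
    ((ENNReal.ofReal_lt_ofReal_iff hκ).2 (half_lt_self hκ) |>.trans_le hκA)
  obtain ⟨F, hFF₀, hsep, hcard⟩ :=
    exists_subset_separated hδ F₀ fun z => (hF₀cap 0 m.succ_pos z).trans hN
  rw [div_lt_iff₀ hδ, mul_comm] at hm
  have hF := isDeltaSet_of_isCappedBelow ha.le hδ hm hsep (hF₀cap.anti hFF₀)
  rw [Fintype.card_fin] at hF
  refine ⟨F, (Finset.coe_subset.2 hFF₀).trans hF₀A, hF, ?_⟩
  rw [Fintype.card_fin, ← ENNReal.ofReal_natCast, ← ENNReal.ofReal_mul (by positivity),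
    ENNReal.ofReal_le_ofReal_iff (by positivity), Real.mul_rpow (by positivity) hδ.le] at hF₀mass
  have hF₀F : (#F₀ : ℝ) ≤ 2 ^ n * #F := by exact_mod_cast Fintype.card_fin n ▸ hcard
  have hδa : 0 < δ ^ a := by positivity
  rw [Real.rpow_neg hδ.le, inv_mul_le_iff₀ (by positivity), mul_inv_le_iff₀ hδa]
  nlinarith [mul_le_mul_of_nonneg_left hF₀F (by positivity : 0 ≤ C * (n + 1) ^ a * δ ^ a)]
end
end

section
/- Let δ ∈ (0,1], 0 < u ≤ s, and let X ⊂ [0,1]^m be a (δ,s)-set with #X ≥ κ δ^{−s}. Then for every scale Δ with δ ≤ Δ ≤ 1, X contains a subset X′ that is a (Δ,s)-set with #X′ ≳ κ Δ^{−s}; moreover, for every u ≤ s, X contains a subset that is a (Δ,u)-set with cardinality ≳ κ Δ^{−u}. -/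
open Metric Set MeasureTheory
open scoped ENNReal

noncomputable section

/-!
Take `S ⊆ X` maximal among the `(Δ,t)`-sets with constant `2`. By maximality every point of `X`
lies in a ball `B(x,r)`, `Δ ≤ r ≤ 1`, holding at least `(r/Δ)^t` points of `S`. By the Vitali
covering lemma, `X` is covered by the `4`-fold enlargements of pairwise disjoint such balls, and
each enlargement holds at most `C (4r/δ)^s ≤ C 4^s δ^{-s} r^t ≤ C 4^s δ^{-s} Δ^t #(S ∩ B(x,r))`
points of `X`. Summing, `κ δ^{-s} ≤ #X ≤ C 4^s δ^{-s} Δ^t #S`, i.e. `#S ≳ κ Δ^{-t}`.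
-/

lemma Finset.ncard_coe_inter_eq_card_filter {α : Type*} (F : Finset α) (B : Set α)
    [DecidablePred (· ∈ B)] : ((F : Set α) ∩ B).ncard = (F.filter (· ∈ B)).card := by
  rw [← Set.ncard_coe_finset, Finset.coe_filter]
  rfl

lemma unitCube_subset_closedBall_zero {ι : Type*} [Fintype ι] :
    {x : ι → ℝ | ∀ i, x i ∈ Icc (0:ℝ) 1} ⊆ closedBall 0 1 := by
  intro x hx
  rw [mem_closedBall_zero_iff, pi_norm_le_iff_of_nonneg zero_le_one]
  intro i
  rw [Real.norm_eq_abs, abs_of_nonneg (hx i).1]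
  exact (hx i).2

section DeltaSet

variable {α : Type*} [PseudoMetricSpace α] {δ Δ s t C : ℝ}

lemma isDeltaSet_empty (hδ : 0 ≤ δ) (hC : 0 ≤ C) : IsDeltaSet δ s C (∅ : Finset α) :=
  ⟨by simp, fun _ r hr _ => by
    simpa using mul_nonneg hC (Real.rpow_nonneg (div_nonneg (hδ.trans hr) hδ) s)⟩

lemma IsDeltaSet.ncard_inter_closedBall_le {X : Finset α} (hX : IsDeltaSet δ s C X) {c : α}
    (hXc : (X : Set α) ⊆ closedBall c 1) (hδ : 0 < δ) (hδ1 : δ ≤ 1) (hs : 0 ≤ s) (hC : 0 ≤ C)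
    (x : α) {r : ℝ} (hr : δ ≤ r) :
    (((X : Set α) ∩ closedBall x r).ncard : ℝ) ≤ C * (r / δ) ^ s := by
  rcases le_or_gt r 1 with hr1 | hr1
  · exact hX.2 x r hr hr1
  calc (((X : Set α) ∩ closedBall x r).ncard : ℝ)
      ≤ ((X : Set α) ∩ closedBall c 1).ncard := by
        rw [inter_eq_left.2 hXc]
        exact_mod_cast Set.ncard_le_ncard inter_subset_left X.finite_toSet
    _ ≤ C * (1 / δ) ^ s := hX.2 c 1 hδ1 le_rfl
    _ ≤ C * (r / δ) ^ s := by gcongr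

lemma exists_maximal_isDeltaSet_subset [DecidableEq α] (X : Finset α) (hδ : 0 ≤ δ)
    (hC : 0 ≤ C) :
    ∃ S ⊆ X, IsDeltaSet δ s C S ∧ ∀ p ∈ X, IsDeltaSet δ s C (insert p S) → p ∈ S := by
  classical
  obtain ⟨S, hSmem, hSmax⟩ := (X.powerset.filter (IsDeltaSet δ s C)).exists_maximal
    ⟨∅, Finset.mem_filter.2 ⟨Finset.empty_mem_powerset X, isDeltaSet_empty hδ hC⟩⟩
  obtain ⟨hSX, hS⟩ := Finset.mem_filter.1 hSmem
  rw [Finset.mem_powerset] at hSX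
  refine ⟨S, hSX, hS, fun p hp hpS => ?_⟩
  have hmem : insert p S ∈ X.powerset.filter (IsDeltaSet δ s C) :=
    Finset.mem_filter.2 ⟨Finset.mem_powerset.2 (Finset.insert_subset hp hSX), hpS⟩
  exact hSmax hmem (Finset.subset_insert p S) (Finset.mem_insert_self p S)

def MemHeavyBall (S : Finset α) (Δ t : ℝ) (p : α) : Prop :=
  ∃ x r, Δ ≤ r ∧ r ≤ 1 ∧ p ∈ closedBall x r ∧
    (r / Δ) ^ t ≤ (((S : Set α) ∩ closedBall x r).ncard : ℝ)

lemma memHeavyBall_of_dist_le {S : Finset α} {p q : α} (hq : q ∈ S) (hpq : dist p q ≤ Δ)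
    (hΔ : 0 < Δ) (hΔ1 : Δ ≤ 1) : MemHeavyBall S Δ t p := by
  refine ⟨q, Δ, le_rfl, hΔ1, hpq, ?_⟩
  rw [div_self hΔ.ne', Real.one_rpow, Nat.one_le_cast, Nat.one_le_iff_ne_zero]
  exact Set.ncard_ne_zero_of_mem ⟨hq, mem_closedBall_self hΔ.le⟩ (S.finite_toSet.inter_of_left _)

lemma IsDeltaSet.memHeavyBall_of_not_insert [DecidableEq α] {S : Finset α} {p : α}
    (hS : IsDeltaSet Δ t 2 S) (hΔ : 0 < Δ) (hΔ1 : Δ ≤ 1) (ht : 0 ≤ t)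
    (hp : ¬ IsDeltaSet Δ t 2 (insert p S)) :
    MemHeavyBall S Δ t p := by
  simp only [IsDeltaSet, not_and_or, not_forall, not_le] at hp
  rcases hp with ⟨a, ha, b, hb, hab, hd⟩ | ⟨x, r, hr, hr1, hlt⟩
  · rcases Finset.mem_insert.1 ha with rfl | haS <;> rcases Finset.mem_insert.1 hb with rfl | hbS
    · exact absurd rfl hab
    · exact memHeavyBall_of_dist_le hbS hd.le hΔ hΔ1
    · exact memHeavyBall_of_dist_le haS (by rw [dist_comm]; exact hd.le) hΔ hΔ1
    · exact absurd (hS.1 a haS b hbS hab) hd.not_ge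
  rw [Finset.coe_insert] at hlt
  by_cases hpB : p ∈ closedBall x r
  · refine ⟨x, r, hr, hr1, hpB, ?_⟩
    -- `p` adds one point to the ball, and `1 ≤ (r/Δ)^t`: the slack of the constant `2`.
    have hone : 1 ≤ (r / Δ) ^ t := Real.one_le_rpow ((one_le_div hΔ).2 hr) ht
    have hins : ((insert p (S : Set α) ∩ closedBall x r).ncard : ℝ)
        ≤ ((S : Set α) ∩ closedBall x r).ncard + 1 := by
      rw [Set.insert_inter_of_mem hpB]
      exact_mod_cast Set.ncard_insert_le _ _
    linarith
  · rw [Set.insert_inter_of_notMem hpB] at hlt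
    exact absurd (hS.2 x r hr hr1) hlt.not_ge

lemma card_le_mul_card_of_ncard_enlarged_closedBall_le {X S : Finset α} {K : ℝ} (hK : 0 ≤ K)
    (c : α → α) (r : α → ℝ) (hmem : ∀ p ∈ X, p ∈ closedBall (c p) (r p))
    (hle : ∀ p ∈ X, (((X : Set α) ∩ closedBall (c p) (4 * r p)).ncard : ℝ)
      ≤ K * ((S : Set α) ∩ closedBall (c p) (r p)).ncard) :
    (X.card : ℝ) ≤ K * S.card := by
  classical
  obtain ⟨R, hR⟩ := (X.finite_toSet.image r).bddAbove
  obtain ⟨u, huX, hdisj, hcov⟩ :=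
    Vitali.exists_disjoint_subfamily_covering_enlargement_closedBall (X : Set α) c r R
      (fun p hp => hR (mem_image_of_mem r hp)) 4 (by norm_num)
  set V := X.filter (· ∈ u)
  have hXV : X ⊆ V.biUnion fun b => X.filter (· ∈ closedBall (c b) (4 * r b)) := by
    intro p hp
    obtain ⟨b, hbu, hsub⟩ := hcov p hp
    exact Finset.mem_biUnion.2 ⟨b, Finset.mem_filter.2 ⟨huX hbu, hbu⟩,
      Finset.mem_filter.2 ⟨hp, hsub (hmem p hp)⟩⟩
  have hSV : ∑ b ∈ V, (S.filter (· ∈ closedBall (c b) (r b))).card ≤ S.card := by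
    have hVdisj : (V : Set α).PairwiseDisjoint fun b => S.filter (· ∈ closedBall (c b) (r b)) :=
      fun b₁ hb₁ b₂ hb₂ hne => Finset.disjoint_left.2 fun _ h₁ h₂ =>
        Set.disjoint_left.1 (hdisj (Finset.mem_filter.1 hb₁).2 (Finset.mem_filter.1 hb₂).2 hne)
          (Finset.mem_filter.1 h₁).2 (Finset.mem_filter.1 h₂).2
    rw [← Finset.card_biUnion hVdisj]
    exact Finset.card_le_card (Finset.biUnion_subset.2 fun _ _ => Finset.filter_subset _ _)
  calc (X.card : ℝ)
      ≤ ∑ b ∈ V, ((X.filter (· ∈ closedBall (c b) (4 * r b))).card : ℝ) := by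
        exact_mod_cast (Finset.card_le_card hXV).trans Finset.card_biUnion_le
    _ ≤ ∑ b ∈ V, K * ((S.filter (· ∈ closedBall (c b) (r b))).card : ℝ) := by
        refine Finset.sum_le_sum fun b hb => ?_
        simpa only [Finset.ncard_coe_inter_eq_card_filter] using
          hle b (Finset.mem_filter.1 hb).1
    _ ≤ K * S.card := by
        rw [← Finset.mul_sum]
        gcongr
        exact_mod_cast hSV

lemma card_le_of_forall_memHeavyBall {X S : Finset α} (hδ : 0 < δ) (hδΔ : δ ≤ Δ) (hts : t ≤ s)
    (hC : 0 ≤ C)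
    (hX : ∀ x r, δ ≤ r → (((X : Set α) ∩ closedBall x r).ncard : ℝ) ≤ C * (r / δ) ^ s)
    (hS : ∀ p ∈ X, MemHeavyBall S Δ t p) :
    (X.card : ℝ) ≤ C * 4 ^ s * Δ ^ t / δ ^ s * S.card := by
  choose! c r hΔr hr1 hmem hheavy using hS
  have hΔ : 0 < Δ := hδ.trans_le hδΔ
  refine card_le_mul_card_of_ncard_enlarged_closedBall_le (by positivity) c r hmem fun p hp => ?_
  have hr : 0 < r p := hδ.trans_le (hδΔ.trans (hΔr p hp))
  calc (((X : Set α) ∩ closedBall (c p) (4 * r p)).ncard : ℝ)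
      ≤ C * (4 * r p / δ) ^ s := hX _ _ (by linarith [hΔr p hp])
    _ = C * 4 ^ s / δ ^ s * r p ^ s := by
        rw [Real.div_rpow (by positivity) hδ.le, Real.mul_rpow (by norm_num) hr.le]
        ring
    _ ≤ C * 4 ^ s / δ ^ s * r p ^ t :=
        mul_le_mul_of_nonneg_left (Real.rpow_le_rpow_of_exponent_ge hr (hr1 p hp) hts)
          (by positivity)
    _ = C * 4 ^ s * Δ ^ t / δ ^ s * (r p / Δ) ^ t := by
        rw [Real.div_rpow hr.le hΔ.le]
        field_simp
    _ ≤ _ := by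
        gcongr
        exact hheavy p hp

lemma exists_isDeltaSet_subset_card_ge {X : Finset α} {κ : ℝ} (hδ : 0 < δ) (hδΔ : δ ≤ Δ)
    (hΔ1 : Δ ≤ 1) (ht : 0 ≤ t) (hts : t ≤ s) (hC : 0 < C)
    (hX : ∀ x r, δ ≤ r → (((X : Set α) ∩ closedBall x r).ncard : ℝ) ≤ C * (r / δ) ^ s)
    (hcard : κ * δ ^ (-s) ≤ X.card) :
    ∃ S ⊆ X, IsDeltaSet Δ t 2 S ∧ (C * 4 ^ s)⁻¹ * (κ * Δ ^ (-t)) ≤ S.card := by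
  classical
  have hΔ : 0 < Δ := hδ.trans_le hδΔ
  obtain ⟨S, hSX, hS, hmax⟩ := exists_maximal_isDeltaSet_subset X hΔ.le zero_le_two (s := t)
  refine ⟨S, hSX, hS, ?_⟩
  have hXS := card_le_of_forall_memHeavyBall hδ hδΔ hts hC.le hX fun p hp => by
    by_cases hpS : p ∈ S
    · exact memHeavyBall_of_dist_le hpS ((dist_self p).trans_le hΔ.le) hΔ hΔ1
    · exact hS.memHeavyBall_of_not_insert hΔ hΔ1 ht (mt (hmax p hp) hpS)
  have hκ : κ ≤ C * 4 ^ s * Δ ^ t * S.card := by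
    have := hcard.trans hXS
    rw [Real.rpow_neg hδ.le, ← div_eq_mul_inv] at this
    exact (div_le_div_iff_of_pos_right (by positivity)).1 (this.trans_eq (by ring))
  rw [Real.rpow_neg hΔ.le, inv_mul_le_iff₀ (by positivity), ← div_eq_mul_inv,
    div_le_iff₀ (by positivity)]
  linarith

end DeltaSet

theorem delta_set_rescaling_general (m : ℕ) (s u C : ℝ) (hu : 0 < u) (hus : u ≤ s)
    (hC : 0 < C) :
    ∃ C' > (0:ℝ), ∃ c > (0:ℝ),
      ∀ (δ : ℝ), 0 < δ → δ ≤ 1 → ∀ (κ : ℝ), 0 < κ →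
        ∀ X : Finset (Fin m → ℝ), (X : Set (Fin m → ℝ)) ⊆ {x | ∀ i, x i ∈ Icc (0:ℝ) 1} →
          IsDeltaSet δ s C X → κ * δ ^ (-s) ≤ (X.card : ℝ) →
            ∀ (Δ : ℝ), δ ≤ Δ → Δ ≤ 1 →
              (∃ X' : Finset (Fin m → ℝ), X' ⊆ X ∧ IsDeltaSet Δ s C' X' ∧
                  c * (κ * Δ ^ (-s)) ≤ (X'.card : ℝ)) ∧
              (∃ X' : Finset (Fin m → ℝ), X' ⊆ X ∧ IsDeltaSet Δ u C' X' ∧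
                  c * (κ * Δ ^ (-u)) ≤ (X'.card : ℝ)) := by
  have hs : 0 ≤ s := hu.le.trans hus
  refine ⟨2, two_pos, (C * 4 ^ s)⁻¹, by positivity, ?_⟩
  intro δ hδ hδ1 κ _ X hcube hX hcard Δ hδΔ hΔ1
  have hcount := hX.ncard_inter_closedBall_le (hcube.trans unitCube_subset_closedBall_zero)
    hδ hδ1 hs hC.le
  exact ⟨exists_isDeltaSet_subset_card_ge hδ hδΔ hΔ1 hs le_rfl hC hcount hcard,
    exists_isDeltaSet_subset_card_ge hδ hδΔ hΔ1 hu.le hus hC hcount hcard⟩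

/-- a `(δ,s)`-set `X ⊆ [0,1]^m` with `#X ≥ κ δ^{-s}` contains,
for every `δ ≤ Δ ≤ 1`, a `(Δ,s)`-subset of cardinality `≳ κ Δ^{-s}`, and for
every `0 < u ≤ s` a `(Δ,u)`-subset of cardinality `≳ κ Δ^{-u}`. -/
theorem delta_set_rescaling (m : ℕ) (s u C : ℝ) (hs : 0 < s) (hu : 0 < u) (hus : u ≤ s)
    (hC : 0 < C) :
    ∃ C' > (0:ℝ), ∃ c > (0:ℝ),
      ∀ (δ : ℝ), 0 < δ → δ ≤ 1 → ∀ (κ : ℝ), 0 < κ →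
        ∀ X : Finset (Fin m → ℝ), (X : Set (Fin m → ℝ)) ⊆ {x | ∀ i, x i ∈ Icc (0:ℝ) 1} →
          IsDeltaSet δ s C X → κ * δ ^ (-s) ≤ (X.card : ℝ) →
            ∀ (Δ : ℝ), δ ≤ Δ → Δ ≤ 1 →
              (∃ X' : Finset (Fin m → ℝ), X' ⊆ X ∧ IsDeltaSet Δ s C' X' ∧
                  c * (κ * Δ ^ (-s)) ≤ (X'.card : ℝ)) ∧
              (∃ X' : Finset (Fin m → ℝ), X' ⊆ X ∧ IsDeltaSet Δ u C' X' ∧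
                  c * (κ * Δ ^ (-u)) ≤ (X'.card : ℝ)) :=
  delta_set_rescaling_general m s u C hu hus hC
end
end

section
/- Let 0 < t < σ, δ ≤ Δ ≤ 1, and let E ⊂ Bⁿ(0,1) be a (Δ,t)-set. For each y ∈ E let T^y be a (Δ,σ)-set of Δ-tubes through y with #T^y ≤ M for all y. Then Σ_{y ∈ E} Σ_{y′ ∈ E \ {y}} min{ |y−y′|^{−σ}, M } ≲ Δ^{−t} Σ_{k=0}^{log₂ Δ^{-1}} Δ^{−t} min{ 2^{k(σ−t)}, M Δ^σ · Δ^{−σ} 2^{−kt} }; in particular, if M = δ^η Δ^{−σ} then the total double sum is ≲ δ^{(σ−t)η/σ} Δ^{−t−σ}. -/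
open Metric Set Classical
open scoped ENNReal

noncomputable section

/-- let `E ⊆ Bⁿ(0,1)` be a `(Δ,t)`-set with `0 < t < σ`, and
suppose each `y ∈ E` carries a family `𝕋 y` of at most `M = δ^η Δ^{-σ}` tubes.
Then `Σ_{y ∈ E} Σ_{y' ≠ y} min{|y-y'|^{-σ}, M} ≲ δ^{(σ-t)η/σ} Δ^{-t-σ}`. -/
theorem bush_pair_count (n : ℕ) (σ t C₀ η : ℝ)
    (ht : 0 < t) (htσ : t < σ) (hC₀ : 0 < C₀) (hη : 0 < η) :
    ∃ C > (0:ℝ),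
      ∀ (δ Δ : ℝ), 0 < δ → δ ≤ Δ → Δ ≤ 1 →
        ∀ M : ℝ, M = δ ^ η * Δ ^ (-σ) →
          ∀ E : Finset (Eucl n), (E : Set (Eucl n)) ⊆ closedBall 0 1 →
            IsDeltaSet Δ t C₀ E →
            ∀ 𝕋 : Eucl n → Finset (Set (Eucl n)),
              (∀ y ∈ E, ((𝕋 y).card : ℝ) ≤ M) →
              ∑ y ∈ E, ∑ y' ∈ E.erase y, min ((dist y y') ^ (-σ)) M
                ≤ C * δ ^ ((σ - t) / σ * η) * Δ ^ (-t - σ) := by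
  have hσ : 0 < σ := ht.trans htσ
  have h2ts : (2:ℝ) ^ (t - σ) < 1 :=
    Real.rpow_lt_one_of_one_lt_of_neg one_lt_two (by linarith)
  have h2t : (0:ℝ) < 2 ^ t := Real.rpow_pos_of_pos two_pos t
  set A : ℝ := C₀ * 2 ^ t / (1 - 2 ^ (t - σ)) with hAdef
  have hApos : 0 < A := div_pos (mul_pos hC₀ h2t) (by linarith)
  refine ⟨(A + C₀) * C₀, by positivity, ?_⟩
  intro δ Δ hδ hδΔ hΔ1 M hM E hEB hE 𝕋 _
  have hΔ : 0 < Δ := lt_of_lt_of_le hδ hδΔ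
  have hδ1 : δ ≤ 1 := hδΔ.trans hΔ1
  set r₀ : ℝ := δ ^ (-η/σ) * Δ with hr₀def
  have hr₀pos : 0 < r₀ := mul_pos (Real.rpow_pos_of_pos hδ _) hΔ
  have hone : (1:ℝ) ≤ δ ^ (-η/σ) :=
    Real.one_le_rpow_of_pos_of_le_one_of_nonpos hδ hδ1
      (by rw [neg_div]; exact neg_nonpos.mpr (by positivity))
  have hΔr₀ : Δ ≤ r₀ := le_mul_of_one_le_left hΔ.le hone
  have hr₀M : r₀ ^ (-σ) = M := by
    rw [hM, hr₀def, Real.mul_rpow (by positivity) hΔ.le, ← Real.rpow_mul hδ.le]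
    congr 1
    field_simp
  have hMnn : 0 ≤ M := by rw [← hr₀M]; positivity
  -- counting lemma for all radii ≥ Δ
  have hset : ∀ (x : Eucl n) (r : ℝ),
      ((E : Set (Eucl n)) ∩ closedBall x r) = ↑(E.filter (fun z => dist z x ≤ r)) := by
    intro x r; ext z; simp [mem_closedBall, and_comm]
  have count : ∀ (x : Eucl n) (r : ℝ), Δ ≤ r →
      ((E.filter (fun z => dist z x ≤ r)).card : ℝ) ≤ C₀ * (r/Δ) ^ t := by
    intro x r hr
    by_cases hr1 : r ≤ 1
    · have h := hE.2 x r hr hr1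
      rwa [hset, Set.ncard_coe_finset] at h
    · push_neg at hr1
      have h1 := hE.2 0 1 hΔ1 le_rfl
      rw [hset, Set.ncard_coe_finset] at h1
      have hEfull : E.filter (fun z => dist z (0:Eucl n) ≤ 1) = E :=
        Finset.filter_true_of_mem (fun z hz => mem_closedBall.mp (hEB hz))
      rw [hEfull] at h1
      have hcard : ((E.filter (fun z => dist z x ≤ r)).card : ℝ) ≤ (E.card : ℝ) := by
        exact_mod_cast Finset.card_le_card (Finset.filter_subset _ _)
      refine hcard.trans (h1.trans ?_)
      apply mul_le_mul_of_nonneg_left _ hC₀.le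
      exact Real.rpow_le_rpow (by positivity) ((div_le_div_iff_of_pos_right hΔ).mpr (by linarith)) ht.le
  have hcardE : (E.card : ℝ) ≤ C₀ * (1/Δ) ^ t := by
    have h := count 0 1 hΔ1
    have hEfull : E.filter (fun z => dist z (0:Eucl n) ≤ 1) = E :=
      Finset.filter_true_of_mem (fun z hz => mem_closedBall.mp (hEB hz))
    rwa [hEfull] at h
  have hdist2 : ∀ y ∈ E, ∀ z ∈ E, dist y z ≤ 2 := by
    intro y hy z hz
    have h1 : dist y (0:Eucl n) ≤ 1 := mem_closedBall.mp (hEB hy)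
    have h2 : dist z (0:Eucl n) ≤ 1 := mem_closedBall.mp (hEB hz)
    calc dist y z ≤ dist y 0 + dist 0 z := dist_triangle _ _ _
      _ ≤ 2 := by rw [dist_comm (0:Eucl n) z]; linarith
  have hne : (1:ℝ) - 2 ^ (t - σ) ≠ 0 := by linarith
  have hAeq : A * (1 - 2 ^ (t - σ)) = C₀ * 2 ^ t := by
    rw [hAdef]; field_simp
  -- dyadic far-sum estimate
  have far : ∀ y ∈ E, ∀ (K : ℕ) (R : ℝ), Δ ≤ R → 2 ≤ 2 ^ K * R →
      ∑ z ∈ (E.erase y).filter (fun z => R < dist y z), dist y z ^ (-σ)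
        ≤ A * ((R/Δ) ^ t * R ^ (-σ)) := by
    intro y hy K
    induction K with
    | zero =>
      intro R hR h2R
      rw [pow_zero, one_mul] at h2R
      have hemp : (E.erase y).filter (fun z => R < dist y z) = ∅ := by
        apply Finset.filter_false_of_mem
        intro z hz
        exact not_lt.mpr ((hdist2 y hy z (Finset.mem_of_mem_erase hz)).trans h2R)
      rw [hemp, Finset.sum_empty]
      have : 0 < R := lt_of_lt_of_le hΔ hR
      positivity
    | succ K ih =>
      intro R hR h2R
      have hRpos : 0 < R := lt_of_lt_of_le hΔ hR
      have hsplit := Finset.sum_filter_add_sum_filter_not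
        ((E.erase y).filter (fun z => R < dist y z)) (fun z => 2*R < dist y z)
        (fun z => dist y z ^ (-σ))
      have hp1 : ∑ z ∈ ((E.erase y).filter (fun z => R < dist y z)).filter
            (fun z => 2*R < dist y z), dist y z ^ (-σ)
          ≤ A * ((2*R/Δ) ^ t * (2*R) ^ (-σ)) := by
        refine le_trans ?_ (ih (2*R) (by linarith)
          (by rw [pow_succ, mul_assoc] at h2R; exact h2R))
        apply Finset.sum_le_sum_of_subset_of_nonneg
        · intro z hz
          simp only [Finset.mem_filter] at hz ⊢
          exact ⟨hz.1.1, hz.2⟩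
        · intro z _ _
          exact Real.rpow_nonneg dist_nonneg _
      have hp2 : ∑ z ∈ ((E.erase y).filter (fun z => R < dist y z)).filter
            (fun z => ¬ 2*R < dist y z), dist y z ^ (-σ)
          ≤ C₀ * (2*R/Δ) ^ t * R ^ (-σ) := by
        have hsub : ((E.erase y).filter (fun z => R < dist y z)).filter
            (fun z => ¬ 2*R < dist y z) ⊆ E.filter (fun z => dist z y ≤ 2*R) := by
          intro z hz
          simp only [Finset.mem_filter, Finset.mem_erase, not_lt] at hz ⊢
          exact ⟨hz.1.1.2, by rw [dist_comm]; exact hz.2⟩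
        calc ∑ z ∈ ((E.erase y).filter (fun z => R < dist y z)).filter
              (fun z => ¬ 2*R < dist y z), dist y z ^ (-σ)
            ≤ ∑ _z ∈ ((E.erase y).filter (fun z => R < dist y z)).filter
              (fun z => ¬ 2*R < dist y z), R ^ (-σ) := by
              apply Finset.sum_le_sum
              intro z hz
              simp only [Finset.mem_filter] at hz
              exact Real.rpow_le_rpow_of_nonpos hRpos hz.1.2.le (by linarith)
          _ = (((E.erase y).filter (fun z => R < dist y z)).filter
              (fun z => ¬ 2*R < dist y z)).card * R ^ (-σ) := by
              rw [Finset.sum_const, nsmul_eq_mul]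
          _ ≤ (C₀ * (2*R/Δ) ^ t) * R ^ (-σ) := by
              apply mul_le_mul_of_nonneg_right _ (by positivity)
              refine le_trans ?_ (count y (2*R) (by linarith))
              exact_mod_cast Finset.card_le_card hsub
          _ = C₀ * (2*R/Δ) ^ t * R ^ (-σ) := by ring
      have e1 : (2*R/Δ:ℝ) ^ t = 2 ^ t * (R/Δ) ^ t := by
        rw [mul_div_assoc, Real.mul_rpow (by norm_num) (by positivity)]
      have e2 : (2*R:ℝ) ^ (-σ) = 2 ^ (-σ) * R ^ (-σ) :=
        Real.mul_rpow (by norm_num) hRpos.le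
      have e3 : (2:ℝ) ^ t * 2 ^ (-σ) = 2 ^ (t-σ) := by
        rw [← Real.rpow_add two_pos]; ring_nf
      have hX : A * ((2*R/Δ) ^ t * (2*R) ^ (-σ))
          = A * 2 ^ (t-σ) * ((R/Δ) ^ t * R ^ (-σ)) := by
        rw [e1, e2, ← e3]; ring
      have hY : C₀ * (2*R/Δ) ^ t * R ^ (-σ) = C₀ * 2 ^ t * ((R/Δ) ^ t * R ^ (-σ)) := by
        rw [e1]; ring
      rw [← hsplit]
      have hcoef : A * 2 ^ (t-σ) * ((R/Δ) ^ t * R ^ (-σ))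
          + C₀ * 2 ^ t * ((R/Δ) ^ t * R ^ (-σ)) = A * ((R/Δ) ^ t * R ^ (-σ)) := by
        linear_combination (-((R/Δ) ^ t * R ^ (-σ))) * hAeq
      linarith [hp1.trans hX.le, hp2.trans hY.le]
  -- per-point estimate
  have inner : ∀ y ∈ E,
      ∑ z ∈ E.erase y, min (dist y z ^ (-σ)) M ≤ (A + C₀) * ((r₀/Δ) ^ t * r₀ ^ (-σ)) := by
    intro y hy
    obtain ⟨K, hK⟩ : ∃ K : ℕ, 2 ≤ 2 ^ K * r₀ := by
      obtain ⟨K, hK⟩ := pow_unbounded_of_one_lt (2/r₀) one_lt_two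
      exact ⟨K, by rw [div_lt_iff₀ hr₀pos] at hK; linarith⟩
    have hsplit := Finset.sum_filter_add_sum_filter_not (E.erase y)
      (fun z => r₀ < dist y z) (fun z => min (dist y z ^ (-σ)) M)
    have h1 : ∑ z ∈ (E.erase y).filter (fun z => r₀ < dist y z), min (dist y z ^ (-σ)) M
        ≤ A * ((r₀/Δ) ^ t * r₀ ^ (-σ)) :=
      le_trans (Finset.sum_le_sum fun z _ => min_le_left _ _) (far y hy K r₀ hΔr₀ hK)
    have h2 : ∑ z ∈ (E.erase y).filter (fun z => ¬ r₀ < dist y z), min (dist y z ^ (-σ)) M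
        ≤ C₀ * ((r₀/Δ) ^ t * r₀ ^ (-σ)) := by
      have hsub : (E.erase y).filter (fun z => ¬ r₀ < dist y z)
          ⊆ E.filter (fun z => dist z y ≤ r₀) := by
        intro z hz
        simp only [Finset.mem_filter, Finset.mem_erase, not_lt] at hz ⊢
        exact ⟨hz.1.2, by rw [dist_comm]; exact hz.2⟩
      calc ∑ z ∈ (E.erase y).filter (fun z => ¬ r₀ < dist y z), min (dist y z ^ (-σ)) M
          ≤ ∑ _z ∈ (E.erase y).filter (fun z => ¬ r₀ < dist y z), M :=
            Finset.sum_le_sum fun z _ => min_le_right _ _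
        _ = ((E.erase y).filter (fun z => ¬ r₀ < dist y z)).card * M := by
            rw [Finset.sum_const, nsmul_eq_mul]
        _ ≤ (C₀ * (r₀/Δ) ^ t) * M := by
            apply mul_le_mul_of_nonneg_right _ hMnn
            refine le_trans ?_ (count y r₀ hΔr₀)
            exact_mod_cast Finset.card_le_card hsub
        _ = C₀ * ((r₀/Δ) ^ t * r₀ ^ (-σ)) := by rw [hr₀M]; ring
    linarith [hsplit]
  -- final algebra
  have e4 : r₀/Δ = δ ^ (-η/σ) := by rw [hr₀def]; field_simp
  have final_alg : (1/Δ) ^ t * ((r₀/Δ) ^ t * r₀ ^ (-σ))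
      = δ ^ ((σ - t) / σ * η) * Δ ^ (-t - σ) := by
    rw [e4, hr₀M, hM, one_div, Real.inv_rpow hΔ.le, ← Real.rpow_neg hΔ.le,
      ← Real.rpow_mul hδ.le]
    rw [show Δ ^ (-t) * (δ ^ (-η/σ*t) * (δ ^ η * Δ ^ (-σ)))
      = (δ ^ (-η/σ*t) * δ ^ η) * (Δ ^ (-t) * Δ ^ (-σ)) from by ring]
    rw [← Real.rpow_add hδ, ← Real.rpow_add hΔ,
      show (-η/σ*t + η) = (σ - t)/σ*η from by field_simp <;> ring,
      show (-t + -σ) = -t - σ from by ring]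
  calc ∑ y ∈ E, ∑ y' ∈ E.erase y, min ((dist y y') ^ (-σ)) M
      ≤ ∑ _y ∈ E, (A + C₀) * ((r₀/Δ) ^ t * r₀ ^ (-σ)) := Finset.sum_le_sum inner
    _ = E.card * ((A + C₀) * ((r₀/Δ) ^ t * r₀ ^ (-σ))) := by
        rw [Finset.sum_const, nsmul_eq_mul]
    _ ≤ (C₀ * (1/Δ) ^ t) * ((A + C₀) * ((r₀/Δ) ^ t * r₀ ^ (-σ))) := by
        apply mul_le_mul_of_nonneg_right hcardE
        have h1 : (0:ℝ) ≤ (r₀/Δ) ^ t * r₀ ^ (-σ) := by positivity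
        positivity
    _ = (A + C₀) * C₀ * ((1/Δ) ^ t * ((r₀/Δ) ^ t * r₀ ^ (-σ))) := by ring
    _ = (A + C₀) * C₀ * δ ^ ((σ - t) / σ * η) * Δ ^ (-t - σ) := by
        rw [final_alg]; ring
end
end
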